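/- arXiv:2312.10541 — 4 statements merged into one kernel-verified Lean document; each statement's English description precedes it below -/
import Mathlib

section
/- Let N = (κ, ν) be a mixed binomial process on a measurable space (E, 𝓔), where the counting distribution κ has finite mean c and finite variance δ². For all nonnegative measurable functions f and g on E with ν(f²) < ∞ and ν(g²) < ∞, the random variables Nf = Σ_{i=1}^K f(X_i) and Ng = Σ_{i=1}^K g(X_i) satisfy Cov(Nf, Ng) = c · ν(fg) + (δ² − c) · ν(f) · ν(g). -/
/-!
Condition on `K`. Since `K` is independent of the sequence `(Xᵢ)`, the joint law of `K` and
`(Xᵢ)` is a product measure, so by Fubini `E[Φ(K, X)] = E[φ(K)]` with `φ(n) = E[Φ(n, X)]`.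
For fixed `n`, the iid structure gives `E[∑_{i<n} f(Xᵢ)] = n ν(f)` and, splitting the double
sum into its `n` diagonal and `n² - n` off-diagonal terms,
`E[(∑_{i<n} f(Xᵢ)) (∑_{j<n} g(Xⱼ))] = n ν(fg) + (n² - n) ν(f) ν(g)`.
Averaging over `K` and subtracting `E[Nf] E[Ng] = c² ν(f) ν(g)` gives the covariance.
Because `f, g ≥ 0`, the product `Nf · Ng` is nonnegative, so by Tonelli it is integrable as soon as
its iterated integral `E[K] ν(fg) + E[K² - K] ν(f) ν(g)` is finite; with `g = f` this gives
`Nf ∈ L²`.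
-/

open MeasureTheory ProbabilityTheory

/-- The covariance of two real-valued random variables:
`Cov(X, Y) = E[(X − E X)(Y − E Y)]`. -/
noncomputable def cov {Ω : Type*} [MeasurableSpace Ω] (X Y : Ω → ℝ) (μ : Measure Ω) : ℝ :=
  ∫ ω, (X ω - ∫ ω', X ω' ∂μ) * (Y ω - ∫ ω', Y ω' ∂μ) ∂μ

open Finset

section IndependentPair

variable {Ω α β : Type*} [MeasurableSpace Ω] [MeasurableSpace α] [MeasurableSpace β]
  {P : Measure Ω} [IsFiniteMeasure P] {Y : Ω → α} {Z : Ω → β} {F : α → β → ℝ}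

theorem ProbabilityTheory.IndepFun.integrable_comp_of_nonneg (hYZ : IndepFun Y Z P)
    (hY : Measurable Y) (hZ : Measurable Z) (hF : Measurable (Function.uncurry F))
    (hF0 : ∀ a b, 0 ≤ F a b) (hFa : ∀ a, Integrable (fun ω => F a (Z ω)) P)
    (hm : Integrable (fun ω => ∫ ω', F (Y ω) (Z ω') ∂P) P) :
    Integrable (fun ω => F (Y ω) (Z ω)) P := by
  have hmap := (indepFun_iff_map_prod_eq_prod_map_map hY.aemeasurable hZ.aemeasurable).1 hYZ
  have hinner : ∀ a, ∫ b, F a b ∂(P.map Z) = ∫ ω', F a (Z ω') ∂P := fun a =>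
    integral_map hZ.aemeasurable (hF.comp measurable_prodMk_left).aestronglyMeasurable
  refine (integrable_map_measure (f := fun ω => (Y ω, Z ω)) hF.aestronglyMeasurable
    (hY.prodMk hZ).aemeasurable).1 ?_
  rw [hmap, integrable_prod_iff (hmap ▸ hF.aestronglyMeasurable)]
  refine ⟨ae_of_all _ fun a => (integrable_map_measure
    (hF.comp measurable_prodMk_left).aestronglyMeasurable hZ.aemeasurable).2 (hFa a), ?_⟩
  simp only [Function.uncurry_apply_pair, Real.norm_of_nonneg (hF0 _ _)]
  refine (integrable_map_measure
    (hF.stronglyMeasurable.integral_prod_right (f := F)).aestronglyMeasurable hY.aemeasurable).2 ?_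
  simpa only [Function.comp_def, hinner] using hm

theorem ProbabilityTheory.IndepFun.integral_comp_eq_integral_integral (hYZ : IndepFun Y Z P)
    (hY : Measurable Y) (hZ : Measurable Z) (hF : Measurable (Function.uncurry F))
    (hint : Integrable (fun ω => F (Y ω) (Z ω)) P) :
    ∫ ω, F (Y ω) (Z ω) ∂P = ∫ ω, ∫ ω', F (Y ω) (Z ω') ∂P ∂P := by
  have hmap := (indepFun_iff_map_prod_eq_prod_map_map hY.aemeasurable hZ.aemeasurable).1 hYZ
  have hYZ' : AEMeasurable (fun ω => (Y ω, Z ω)) P := (hY.prodMk hZ).aemeasurable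
  have hint' : Integrable (Function.uncurry F) ((P.map Y).prod (P.map Z)) := by
    rw [← hmap]
    exact (integrable_map_measure hF.aestronglyMeasurable hYZ').2 hint
  have hinner : ∀ a, ∫ b, F a b ∂(P.map Z) = ∫ ω', F a (Z ω') ∂P := fun a =>
    integral_map hZ.aemeasurable (hF.comp measurable_prodMk_left).aestronglyMeasurable
  calc ∫ ω, F (Y ω) (Z ω) ∂P = ∫ p, Function.uncurry F p ∂(P.map fun ω => (Y ω, Z ω)) :=
        (integral_map hYZ' hF.aestronglyMeasurable).symm
    _ = ∫ a, ∫ b, F a b ∂(P.map Z) ∂(P.map Y) := by rw [hmap, integral_prod _ hint']; rfl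
    _ = ∫ ω, ∫ b, F (Y ω) b ∂(P.map Z) ∂P :=
        integral_map hY.aemeasurable
          (hF.stronglyMeasurable.integral_prod_right (f := F)).aestronglyMeasurable
    _ = ∫ ω, ∫ ω', F (Y ω) (Z ω') ∂P ∂P := by simp only [hinner]

end IndependentPair

section IdenticallyDistributed

variable {Ω E : Type*} [MeasurableSpace Ω] [MeasurableSpace E] {P : Measure Ω}
  {ν : Measure E} {X : ℕ → Ω → E} {f g : E → ℝ}

lemma integrable_comp_of_map_eq {Y : Ω → E} (hY : Measurable Y) (hlaw : P.map Y = ν)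
    (hf : Integrable f ν) : Integrable (fun ω => f (Y ω)) P :=
  (hlaw ▸ hf).comp_measurable hY

lemma integral_comp_of_map_eq {Y : Ω → E} (hY : Measurable Y) (hlaw : P.map Y = ν)
    (hf : AEStronglyMeasurable f ν) : ∫ ω, f (Y ω) ∂P = ∫ x, f x ∂ν := by
  rw [← hlaw, integral_map hY.aemeasurable (hlaw ▸ hf)]

lemma integral_sum_range_comp (hX : ∀ i, Measurable (X i)) (hlaw : ∀ i, P.map (X i) = ν)
    (hf : Integrable f ν) (n : ℕ) :
    ∫ ω, ∑ i ∈ range n, f (X i ω) ∂P = n * ∫ x, f x ∂ν := by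
  rw [integral_finsetSum _ fun i _ => integrable_comp_of_map_eq (hX i) (hlaw i) hf]
  simp [integral_comp_of_map_eq (hX _) (hlaw _) hf.aestronglyMeasurable]

lemma integral_comp_mul_comp (hX : ∀ i, Measurable (X i)) (hlaw : ∀ i, P.map (X i) = ν)
    (hpair : Pairwise fun i j => IndepFun (X i) (X j) P) (hfm : Measurable f) (hgm : Measurable g)
    (hf : Integrable f ν) (hg : Integrable g ν) (hfg : Integrable (f * g) ν) (i j : ℕ) :
    Integrable (fun ω => f (X i ω) * g (X j ω)) P ∧
      ∫ ω, f (X i ω) * g (X j ω) ∂P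
        = if i = j then ∫ x, f x * g x ∂ν else (∫ x, f x ∂ν) * ∫ x, g x ∂ν := by
  rcases eq_or_ne i j with rfl | hij
  · exact ⟨integrable_comp_of_map_eq (hX i) (hlaw i) hfg,
      by simpa using integral_comp_of_map_eq (hX i) (hlaw i) hfg.aestronglyMeasurable⟩
  · have hind : IndepFun (fun ω => f (X i ω)) (fun ω => g (X j ω)) P := (hpair hij).comp hfm hgm
    refine ⟨hind.integrable_mul (integrable_comp_of_map_eq (hX i) (hlaw i) hf)
      (integrable_comp_of_map_eq (hX j) (hlaw j) hg), ?_⟩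
    rw [if_neg hij, ← integral_comp_of_map_eq (hX i) (hlaw i) hf.aestronglyMeasurable,
      ← integral_comp_of_map_eq (hX j) (hlaw j) hg.aestronglyMeasurable]
    exact hind.integral_mul_eq_mul_integral (hfm.comp (hX i)).aestronglyMeasurable
      (hgm.comp (hX j)).aestronglyMeasurable

lemma sum_range_sum_range_ite (a b : ℝ) (n : ℕ) :
    ∑ i ∈ range n, ∑ j ∈ range n, (if i = j then a else b) = n * a + ((n : ℝ) ^ 2 - n) * b := by
  have h : ∀ i ∈ range n, ∑ j ∈ range n, (if i = j then a else b) = (a - b) + n * b := by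
    intro i hi
    simp_rw [show ∀ j, (if i = j then a else b) = (if i = j then a - b else 0) + b by
      intro j; split_ifs <;> ring]
    simp [sum_add_distrib, hi]
  rw [sum_congr rfl h, sum_const, card_range, nsmul_eq_mul]
  ring

lemma integral_sum_range_mul_sum_range (hX : ∀ i, Measurable (X i))
    (hlaw : ∀ i, P.map (X i) = ν) (hpair : Pairwise fun i j => IndepFun (X i) (X j) P)
    (hfm : Measurable f) (hgm : Measurable g)
    (hf : Integrable f ν) (hg : Integrable g ν) (hfg : Integrable (f * g) ν) (n : ℕ) :
    ∫ ω, (∑ i ∈ range n, f (X i ω)) * ∑ j ∈ range n, g (X j ω) ∂P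
      = n * ∫ x, f x * g x ∂ν + ((n : ℝ) ^ 2 - n) * ((∫ x, f x ∂ν) * ∫ x, g x ∂ν) := by
  have hij := integral_comp_mul_comp hX hlaw hpair hfm hgm hf hg hfg
  simp_rw [sum_mul_sum]
  rw [integral_finsetSum _ fun i _ => integrable_finsetSum _ fun j _ => (hij i j).1]
  simp_rw [integral_finsetSum _ fun j _ => (hij _ j).1, (hij _ _).2]
  exact sum_range_sum_range_ite _ _ n

lemma integrable_sum_range_mul_sum_range (hX : ∀ i, Measurable (X i))
    (hlaw : ∀ i, P.map (X i) = ν) (hpair : Pairwise fun i j => IndepFun (X i) (X j) P)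
    (hfm : Measurable f) (hgm : Measurable g)
    (hf : Integrable f ν) (hg : Integrable g ν) (hfg : Integrable (f * g) ν) (n : ℕ) :
    Integrable (fun ω => (∑ i ∈ range n, f (X i ω)) * ∑ j ∈ range n, g (X j ω)) P := by
  simp_rw [sum_mul_sum]
  exact integrable_finsetSum _ fun i _ => integrable_finsetSum _ fun j _ =>
    (integral_comp_mul_comp hX hlaw hpair hfm hgm hf hg hfg i j).1

end IdenticallyDistributed

section RandomSum

variable {Ω E : Type*} [MeasurableSpace Ω] [MeasurableSpace E] {P : Measure Ω}
  [IsFiniteMeasure P] {ν : Measure E} {K : Ω → ℕ} {X : ℕ → Ω → E} {f g : E → ℝ}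

def randomSum (K : Ω → ℕ) (X : ℕ → Ω → E) (f : E → ℝ) (ω : Ω) : ℝ :=
  ∑ i ∈ range (K ω), f (X i ω)

lemma measurable_sum_range_comp_apply (hfm : Measurable f) (n : ℕ) :
    Measurable fun s : ℕ → E => ∑ i ∈ range n, f (s i) :=
  Finset.measurable_sum _ fun i _ => hfm.comp (measurable_pi_apply i)

lemma measurable_uncurry_sum_range_mul_sum_range (hfm : Measurable f) (hgm : Measurable g) :
    Measurable (Function.uncurry fun (n : ℕ) (s : ℕ → E) =>
      (∑ i ∈ range n, f (s i)) * ∑ j ∈ range n, g (s j)) :=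
  measurable_from_prod_countable_right fun n =>
    (measurable_sum_range_comp_apply hfm n).fun_mul (measurable_sum_range_comp_apply hgm n)

lemma measurable_randomSum (hK : Measurable K) (hX : ∀ i, Measurable (X i))
    (hfm : Measurable f) : Measurable (randomSum K X f) :=
  Measurable.comp (g := fun p : ℕ × (ℕ → E) => ∑ i ∈ range p.1, f (p.2 i))
    (measurable_from_prod_countable_right (measurable_sum_range_comp_apply hfm))
    (hK.prodMk (measurable_pi_lambda _ hX))

lemma integral_randomSum (hK : Measurable K) (hX : ∀ i, Measurable (X i))
    (hlaw : ∀ i, P.map (X i) = ν) (hindep : IndepFun K (fun ω i => X i ω) P)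
    (hfm : Measurable f) (hf : Integrable f ν) (hint : Integrable (randomSum K X f) P) :
    ∫ ω, randomSum K X f ω ∂P = (∫ ω, (K ω : ℝ) ∂P) * ∫ x, f x ∂ν := by
  have h := hindep.integral_comp_eq_integral_integral
    (F := fun (n : ℕ) (s : ℕ → E) => ∑ i ∈ range n, f (s i))
    hK (measurable_pi_lambda _ hX)
    (measurable_from_prod_countable_right (measurable_sum_range_comp_apply hfm)) hint
  simp only [integral_sum_range_comp hX hlaw hf] at h
  exact h.trans (integral_mul_const _ _)

lemma integrable_randomSum_mul_randomSum (hK : Measurable K) (hX : ∀ i, Measurable (X i))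
    (hlaw : ∀ i, P.map (X i) = ν) (hpair : Pairwise fun i j => IndepFun (X i) (X j) P)
    (hindep : IndepFun K (fun ω i => X i ω) P) (hK2 : MemLp (fun ω => (K ω : ℝ)) 2 P)
    (hfm : Measurable f) (hf0 : ∀ x, 0 ≤ f x) (hgm : Measurable g) (hg0 : ∀ x, 0 ≤ g x)
    (hf : Integrable f ν) (hg : Integrable g ν) (hfg : Integrable (f * g) ν) :
    Integrable (randomSum K X f * randomSum K X g) P := by
  refine hindep.integrable_comp_of_nonneg
    (F := fun (n : ℕ) (s : ℕ → E) => (∑ i ∈ range n, f (s i)) * ∑ j ∈ range n, g (s j))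
    hK (measurable_pi_lambda _ hX) (measurable_uncurry_sum_range_mul_sum_range hfm hgm)
    (fun n s => mul_nonneg (sum_nonneg fun i _ => hf0 _) (sum_nonneg fun i _ => hg0 _))
    (integrable_sum_range_mul_sum_range hX hlaw hpair hfm hgm hf hg hfg) ?_
  simp only [integral_sum_range_mul_sum_range hX hlaw hpair hfm hgm hf hg hfg]
  have hK1 := hK2.integrable one_le_two
  exact (hK1.mul_const _).add ((hK2.integrable_sq.sub' hK1).mul_const _)

lemma integral_randomSum_mul_randomSum (hK : Measurable K) (hX : ∀ i, Measurable (X i))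
    (hlaw : ∀ i, P.map (X i) = ν) (hpair : Pairwise fun i j => IndepFun (X i) (X j) P)
    (hindep : IndepFun K (fun ω i => X i ω) P) (hK2 : MemLp (fun ω => (K ω : ℝ)) 2 P)
    (hfm : Measurable f) (hgm : Measurable g)
    (hf : Integrable f ν) (hg : Integrable g ν) (hfg : Integrable (f * g) ν)
    (hint : Integrable (randomSum K X f * randomSum K X g) P) :
    ∫ ω, randomSum K X f ω * randomSum K X g ω ∂P
      = (∫ ω, (K ω : ℝ) ∂P) * ∫ x, f x * g x ∂ν
        + ((∫ ω, (K ω : ℝ) ^ 2 ∂P) - ∫ ω, (K ω : ℝ) ∂P) * ((∫ x, f x ∂ν) * ∫ x, g x ∂ν) := by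
  have h := hindep.integral_comp_eq_integral_integral
    (F := fun (n : ℕ) (s : ℕ → E) => (∑ i ∈ range n, f (s i)) * ∑ j ∈ range n, g (s j))
    hK (measurable_pi_lambda _ hX) (measurable_uncurry_sum_range_mul_sum_range hfm hgm) hint
  simp only [integral_sum_range_mul_sum_range hX hlaw hpair hfm hgm hf hg hfg] at h
  have hK1 := hK2.integrable one_le_two
  refine h.trans ?_
  rw [integral_add (hK1.mul_const _) ((hK2.integrable_sq.sub' hK1).mul_const _),
    integral_mul_const, integral_mul_const, integral_sub hK2.integrable_sq hK1]

lemma memLp_randomSum [IsFiniteMeasure ν] (hK : Measurable K) (hX : ∀ i, Measurable (X i))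
    (hlaw : ∀ i, P.map (X i) = ν) (hpair : Pairwise fun i j => IndepFun (X i) (X j) P)
    (hindep : IndepFun K (fun ω i => X i ω) P) (hK2 : MemLp (fun ω => (K ω : ℝ)) 2 P)
    (hfm : Measurable f) (hf0 : ∀ x, 0 ≤ f x) (hf : MemLp f 2 ν) :
    MemLp (randomSum K X f) 2 P := by
  refine (memLp_two_iff_integrable_sq (measurable_randomSum hK hX hfm).aestronglyMeasurable).2 ?_
  simpa only [sq, Pi.mul_def] using integrable_randomSum_mul_randomSum hK hX hlaw hpair hindep hK2
    hfm hf0 hfm hf0 (hf.integrable one_le_two) (hf.integrable one_le_two) (hf.integrable_mul hf)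

end RandomSum

/-- For a mixed binomial process `N = (κ, ν)` with counting variable `K ~ κ`
of finite mean `c` and finite variance `δ²`, and nonnegative measurable `f, g` with
`ν(f²) < ∞` and `ν(g²) < ∞`, the random variables `Nf = ∑_{i=1}^K f(X_i)` and
`Ng = ∑_{i=1}^K g(X_i)` satisfy `Cov(Nf, Ng) = c · ν(fg) + (δ² − c) · ν(f) · ν(g)`. -/
theorem mixedBinomial_covariance
    {Ω : Type*} [MeasurableSpace Ω] (P : Measure Ω) [IsProbabilityMeasure P]
    {E : Type*} [mE : MeasurableSpace E] (ν : Measure E) [IsProbabilityMeasure ν]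
    (K : Ω → ℕ) (X : ℕ → Ω → E)
    (hK : Measurable K) (hX : ∀ i, Measurable (X i))
    -- the Xᵢ are iid with common law ν
    (hlaw : ∀ i, Measure.map (X i) P = ν)
    (hiid : iIndepFun X P)
    -- K is independent of the sequence (Xᵢ)
    (hindep : IndepFun K (fun ω i => X i ω) P)
    -- the counting distribution κ (the law of K) has finite mean and finite variance
    (hK2 : MemLp (fun ω => (K ω : ℝ)) 2 P)
    (f g : E → ℝ) (hf : Measurable f) (hf0 : ∀ x, 0 ≤ f x)
    (hg : Measurable g) (hg0 : ∀ x, 0 ≤ g x)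
    -- ν(f²) < ∞ and ν(g²) < ∞
    (hf2 : Integrable (fun x => f x ^ 2) ν)
    (hg2 : Integrable (fun x => g x ^ 2) ν) :
    cov (fun ω => ∑ i ∈ Finset.range (K ω), f (X i ω))
        (fun ω => ∑ i ∈ Finset.range (K ω), g (X i ω)) P
      = (∫ ω, (K ω : ℝ) ∂P) * ∫ x, f x * g x ∂ν
        + (variance (fun ω => (K ω : ℝ)) P - ∫ ω, (K ω : ℝ) ∂P)
            * (∫ x, f x ∂ν) * (∫ x, g x ∂ν) := by
  have hpair : Pairwise fun i j => IndepFun (X i) (X j) P := fun i j hij => hiid.indepFun hij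
  have hfL2 : MemLp f 2 ν := (memLp_two_iff_integrable_sq hf.aestronglyMeasurable).2 hf2
  have hgL2 : MemLp g 2 ν := (memLp_two_iff_integrable_sq hg.aestronglyMeasurable).2 hg2
  have hNf := memLp_randomSum hK hX hlaw hpair hindep hK2 hf hf0 hfL2
  have hNg := memLp_randomSum hK hX hlaw hpair hindep hK2 hg hg0 hgL2
  have hfL1 := hfL2.integrable one_le_two
  have hgL1 := hgL2.integrable one_le_two
  have hEfg := integral_randomSum_mul_randomSum hK hX hlaw hpair hindep hK2 hf hg hfL1 hgL1
    (hfL2.integrable_mul hgL2) (hNf.integrable_mul hNg)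
  change covariance (randomSum K X f) (randomSum K X g) P = _
  rw [covariance_eq_sub hNf hNg, Pi.mul_def, hEfg,
    integral_randomSum hK hX hlaw hindep hf hfL1 (hNf.integrable one_le_two),
    integral_randomSum hK hX hlaw hindep hg hgL1 (hNg.integrable one_le_two), variance_eq_sub hK2]
  simp only [Pi.pow_apply]
  ring
end

section
/- Let N = (κ, ν) be a mixed binomial process on a measurable space (E, 𝓔), where the counting distribution κ has finite mean c and finite variance δ². For all disjoint measurable sets A and B in 𝓔, the counting variables N(A) = Σ_{i=1}^K 1_A(X_i) and N(B) = Σ_{i=1}^K 1_B(X_i) satisfy Cov(N(A), N(B)) = (δ² − c) · ν(A) · ν(B). -/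
open MeasureTheory ProbabilityTheory

/-! Conditionally on `K = n`, the process is binomial with `n` points, for which
`E[N(A) N(B)] = n ν(A ∩ B) + n(n-1) ν(A) ν(B)`: the `n` diagonal terms contribute `ν(A ∩ B)`,
the `n(n-1)` off-diagonal ones `ν(A) ν(B)` by independence. As `K` is independent of the points,
integrating over the law of `K` gives `Cov(N(A), N(B)) = c ν(A ∩ B) + (δ² − c) ν(A) ν(B)`,
and the first term vanishes for disjoint sets. -/

open Finset

lemma cov_eq_covariance {Ω : Type*} [MeasurableSpace Ω] (X Y : Ω → ℝ) (μ : Measure Ω) :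
    cov X Y μ = covariance X Y μ := rfl

lemma ProbabilityTheory.IndepFun.integral_comp_prodMk_eq_integral_integral
    {Ω α β : Type*} [MeasurableSpace Ω] [MeasurableSpace α] [MeasurableSpace β]
    {P : Measure Ω} [IsFiniteMeasure P] {U : Ω → α} {V : Ω → β}
    (hUV : IndepFun U V P) (hU : Measurable U) (hV : Measurable V)
    {F : α × β → ℝ} (hF : Measurable F) (hint : Integrable (fun ω => F (U ω, V ω)) P) :
    ∫ ω, F (U ω, V ω) ∂P = ∫ ω, ∫ ω', F (U ω, V ω') ∂P ∂P := by
  have hUV_meas : Measurable fun ω => (U ω, V ω) := hU.prodMk hV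
  have hmap : P.map (fun ω => (U ω, V ω)) = (P.map U).prod (P.map V) :=
    (indepFun_iff_map_prod_eq_prod_map_map hU.aemeasurable hV.aemeasurable).1 hUV
  have hFint : Integrable F ((P.map U).prod (P.map V)) := by
    rw [← hmap]
    exact (integrable_map_measure hF.aestronglyMeasurable hUV_meas.aemeasurable).2 hint
  calc ∫ ω, F (U ω, V ω) ∂P = ∫ p, F p ∂((P.map U).prod (P.map V)) := by
        rw [← hmap, integral_map hUV_meas.aemeasurable hF.aestronglyMeasurable]
    _ = ∫ a, ∫ b, F (a, b) ∂(P.map V) ∂(P.map U) := integral_prod F hFint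
    _ = ∫ ω, ∫ b, F (U ω, b) ∂(P.map V) ∂P :=
        integral_map hU.aemeasurable hFint.integral_prod_left.aestronglyMeasurable
    _ = ∫ ω, ∫ ω', F (U ω, V ω') ∂P ∂P := by
        congr with ω
        exact integral_map hV.aemeasurable (hF.comp measurable_prodMk_left).aestronglyMeasurable

section PointCount

variable {E : Type*}

noncomputable def pointCount (A : Set E) (n : ℕ) (x : ℕ → E) : ℝ :=
  ∑ i ∈ range n, A.indicator 1 (x i)

lemma pointCount_nonneg (A : Set E) (n : ℕ) (x : ℕ → E) : 0 ≤ pointCount A n x :=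
  sum_nonneg fun _ _ => Set.indicator_nonneg (fun _ _ => zero_le_one) _

lemma pointCount_le (A : Set E) (n : ℕ) (x : ℕ → E) : pointCount A n x ≤ n := by
  calc pointCount A n x ≤ ∑ _i ∈ range n, (1 : ℝ) :=
        sum_le_sum fun _ _ => Set.indicator_le_self' (fun _ _ => zero_le_one) _
    _ = n := by simp

lemma measurable_pointCount [MeasurableSpace E] {A : Set E} (hA : MeasurableSet A) :
    Measurable fun p : ℕ × (ℕ → E) => pointCount A p.1 p.2 := by
  have h1A : Measurable (A.indicator (1 : E → ℝ)) := measurable_one.indicator hA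
  exact measurable_from_prod_countable_right fun n =>
    Finset.measurable_fun_sum (range n) fun i _ => h1A.comp (measurable_pi_apply i)

variable {Ω : Type*} [MeasurableSpace Ω] [MeasurableSpace E] {P : Measure Ω}
  {ν : Measure E} {A B : Set E}

lemma integral_indicator_one_comp {Y : Ω → E} (hY : Measurable Y) (hlaw : P.map Y = ν)
    (hA : MeasurableSet A) : ∫ ω, A.indicator 1 (Y ω) ∂P = ν.real A := by
  rw [← integral_map hY.aemeasurable (measurable_one.indicator hA).aestronglyMeasurable, hlaw,
    integral_indicator_one hA]

lemma integrable_indicator_one_comp [IsFiniteMeasure P] {Y : Ω → E} (hY : Measurable Y)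
    (hA : MeasurableSet A) : Integrable (fun ω => A.indicator (1 : E → ℝ) (Y ω)) P :=
  (integrable_const 1).indicator (hY hA)

lemma integrable_indicator_one_comp_mul_indicator_one_comp [IsFiniteMeasure P] {Y Z : Ω → E}
    (hY : Measurable Y) (hZ : Measurable Z) (hA : MeasurableSet A) (hB : MeasurableSet B) :
    Integrable (fun ω => A.indicator (1 : E → ℝ) (Y ω) * B.indicator 1 (Z ω)) P :=
  (integrable_indicator_one_comp hZ hB).bdd_mul (c := 1)
    ((measurable_one.indicator hA).comp hY).aestronglyMeasurable
    (ae_of_all _ fun ω => (norm_indicator_le_norm_self _ _).trans (by simp))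

lemma integral_indicator_one_comp_mul_indicator_one_comp {Y Z : Ω → E}
    (hY : Measurable Y) (hZ : Measurable Z) (hYlaw : P.map Y = ν) (hZlaw : P.map Z = ν)
    (hYZ : IndepFun Y Z P) (hA : MeasurableSet A) (hB : MeasurableSet B) :
    ∫ ω, A.indicator 1 (Y ω) * B.indicator 1 (Z ω) ∂P = ν.real A * ν.real B := by
  rw [hYZ.integral_fun_comp_mul_comp hY.aemeasurable hZ.aemeasurable
    (measurable_one.indicator hA).aestronglyMeasurable
    (measurable_one.indicator hB).aestronglyMeasurable,
    integral_indicator_one_comp hY hYlaw hA, integral_indicator_one_comp hZ hZlaw hB]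

variable {X : ℕ → Ω → E}

lemma integral_pointCount [IsFiniteMeasure P] (hX : ∀ i, Measurable (X i))
    (hlaw : ∀ i, P.map (X i) = ν) (hA : MeasurableSet A) (n : ℕ) :
    ∫ ω, pointCount A n (X · ω) ∂P = n * ν.real A := by
  simp only [pointCount]
  rw [integral_finsetSum _ fun i _ => integrable_indicator_one_comp (hX i) hA]
  simp [integral_indicator_one_comp (hX _) (hlaw _) hA]

lemma integral_pointCount_mul_pointCount [IsFiniteMeasure P] (hX : ∀ i, Measurable (X i))
    (hlaw : ∀ i, P.map (X i) = ν) (hindep : Pairwise fun i j => IndepFun (X i) (X j) P)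
    (hA : MeasurableSet A) (hB : MeasurableSet B) (n : ℕ) :
    ∫ ω, pointCount A n (X · ω) * pointCount B n (X · ω) ∂P
      = n * ν.real (A ∩ B) + (n ^ 2 - n) * (ν.real A * ν.real B) := by
  have hterm : ∀ i j, ∫ ω, A.indicator 1 (X i ω) * B.indicator 1 (X j ω) ∂P
      = ν.real A * ν.real B + if i = j then ν.real (A ∩ B) - ν.real A * ν.real B else 0 := by
    intro i j
    rcases eq_or_ne i j with rfl | hij
    · simp_rw [← Pi.mul_apply (A.indicator 1), ← Set.inter_indicator_one,
        integral_indicator_one_comp (hX i) (hlaw i) (hA.inter hB)]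
      simp
    · rw [if_neg hij, add_zero]
      exact integral_indicator_one_comp_mul_indicator_one_comp (hX i) (hX j) (hlaw i) (hlaw j)
        (hindep hij) hA hB
  have hint := fun i j => integrable_indicator_one_comp_mul_indicator_one_comp (P := P)
    (hX i) (hX j) hA hB
  simp only [pointCount, sum_mul_sum]
  rw [integral_finsetSum _ fun i _ => integrable_finsetSum _ fun j _ => hint i j]
  simp_rw [integral_finsetSum _ fun j _ => hint _ j, hterm, sum_add_distrib, sum_ite_eq,
    sum_ite_mem, inter_self]
  simp only [sum_const, card_range, nsmul_eq_mul]
  ring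

end PointCount

section MixedBinomial

variable {Ω E : Type*} [MeasurableSpace Ω] [MeasurableSpace E] {P : Measure Ω} {ν : Measure E}
  {A B : Set E} {K : Ω → ℕ} {X : ℕ → Ω → E}

lemma memLp_pointCount {p : ENNReal} (hK : Measurable K) (hX : ∀ i, Measurable (X i))
    (hA : MeasurableSet A) (hKp : MemLp (fun ω => (K ω : ℝ)) p P) :
    MemLp (fun ω => pointCount A (K ω) (X · ω)) p P := by
  refine hKp.of_le ?_ (ae_of_all _ fun ω => ?_)
  · exact ((measurable_pointCount hA).comp
      (hK.prodMk (measurable_pi_lambda _ hX))).aestronglyMeasurable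
  · rw [Real.norm_of_nonneg (pointCount_nonneg ..), Real.norm_of_nonneg (Nat.cast_nonneg _)]
    exact pointCount_le ..

variable [IsProbabilityMeasure P]

lemma integral_pointCount_of_indepFun (hK : Measurable K) (hX : ∀ i, Measurable (X i))
    (hlaw : ∀ i, P.map (X i) = ν) (hKX : IndepFun K (fun ω i => X i ω) P)
    (hK1 : Integrable (fun ω => (K ω : ℝ)) P) (hA : MeasurableSet A) :
    ∫ ω, pointCount A (K ω) (X · ω) ∂P = (∫ ω, (K ω : ℝ) ∂P) * ν.real A := by
  calc ∫ ω, pointCount A (K ω) (X · ω) ∂P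
        = ∫ ω, ∫ ω', pointCount A (K ω) (X · ω') ∂P ∂P :=
          hKX.integral_comp_prodMk_eq_integral_integral hK (measurable_pi_lambda _ hX)
            (measurable_pointCount hA)
            ((memLp_pointCount hK hX hA (memLp_one_iff_integrable.2 hK1)).integrable le_rfl)
    _ = ∫ ω, (K ω : ℝ) * ν.real A ∂P := by simp_rw [integral_pointCount hX hlaw hA]
    _ = (∫ ω, (K ω : ℝ) ∂P) * ν.real A := integral_mul_const _ _

lemma integral_pointCount_mul_pointCount_of_indepFun (hK : Measurable K)
    (hX : ∀ i, Measurable (X i)) (hlaw : ∀ i, P.map (X i) = ν)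
    (hindep : Pairwise fun i j => IndepFun (X i) (X j) P) (hKX : IndepFun K (fun ω i => X i ω) P)
    (hK2 : MemLp (fun ω => (K ω : ℝ)) 2 P) (hA : MeasurableSet A) (hB : MeasurableSet B) :
    ∫ ω, pointCount A (K ω) (X · ω) * pointCount B (K ω) (X · ω) ∂P
      = (∫ ω, (K ω : ℝ) ∂P) * ν.real (A ∩ B)
        + (∫ ω, (K ω : ℝ) ^ 2 ∂P - ∫ ω, (K ω : ℝ) ∂P) * (ν.real A * ν.real B) := by
  have hK1 : Integrable (fun ω => (K ω : ℝ)) P := hK2.integrable one_le_two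
  have hK2_sub_K : Integrable (fun ω => (K ω : ℝ) ^ 2 - K ω) P := hK2.integrable_sq.sub hK1
  calc ∫ ω, pointCount A (K ω) (X · ω) * pointCount B (K ω) (X · ω) ∂P
        = ∫ ω, ∫ ω', pointCount A (K ω) (X · ω') * pointCount B (K ω) (X · ω') ∂P ∂P :=
          hKX.integral_comp_prodMk_eq_integral_integral hK (measurable_pi_lambda _ hX)
            ((measurable_pointCount hA).mul (measurable_pointCount hB))
            ((memLp_pointCount hK hX hA hK2).integrable_mul (memLp_pointCount hK hX hB hK2))
    _ = ∫ ω, ((K ω : ℝ) * ν.real (A ∩ B) + ((K ω : ℝ) ^ 2 - K ω) * (ν.real A * ν.real B)) ∂P := by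
          simp_rw [integral_pointCount_mul_pointCount hX hlaw hindep hA hB]
    _ = _ := by
          rw [integral_add (hK1.mul_const _) (hK2_sub_K.mul_const _),
            integral_mul_const, integral_mul_const, integral_sub hK2.integrable_sq hK1]

theorem cov_pointCount_of_indepFun (hK : Measurable K)
    (hX : ∀ i, Measurable (X i)) (hlaw : ∀ i, P.map (X i) = ν)
    (hindep : Pairwise fun i j => IndepFun (X i) (X j) P) (hKX : IndepFun K (fun ω i => X i ω) P)
    (hK2 : MemLp (fun ω => (K ω : ℝ)) 2 P) (hA : MeasurableSet A) (hB : MeasurableSet B) :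
    cov (fun ω => pointCount A (K ω) (X · ω)) (fun ω => pointCount B (K ω) (X · ω)) P
      = (∫ ω, (K ω : ℝ) ∂P) * ν.real (A ∩ B)
        + (variance (fun ω => (K ω : ℝ)) P - ∫ ω, (K ω : ℝ) ∂P) * ν.real A * ν.real B := by
  rw [cov_eq_covariance, covariance_eq_sub (memLp_pointCount hK hX hA hK2)
      (memLp_pointCount hK hX hB hK2), variance_eq_sub hK2]
  simp only [Pi.mul_apply, Pi.pow_apply]
  rw [integral_pointCount_mul_pointCount_of_indepFun hK hX hlaw hindep hKX hK2 hA hB,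
    integral_pointCount_of_indepFun hK hX hlaw hKX (hK2.integrable one_le_two) hA,
    integral_pointCount_of_indepFun hK hX hlaw hKX (hK2.integrable one_le_two) hB]
  ring

end MixedBinomial

theorem mixedBinomial_covariance_disjoint_sets_general
    {Ω : Type*} [MeasurableSpace Ω] (P : Measure Ω) [IsProbabilityMeasure P]
    {E : Type*} [mE : MeasurableSpace E] (ν : Measure E)
    (K : Ω → ℕ) (X : ℕ → Ω → E)
    (hK : Measurable K) (hX : ∀ i, Measurable (X i))
    -- the Xᵢ are iid with common law ν
    (hlaw : ∀ i, Measure.map (X i) P = ν)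
    (hiid : iIndepFun X P)
    -- K is independent of the sequence (Xᵢ)
    (hindep : IndepFun K (fun ω i => X i ω) P)
    -- the counting distribution κ (the law of K) has finite mean and finite variance
    (hK2 : MemLp (fun ω => (K ω : ℝ)) 2 P)
    (A B : Set E) (hA : MeasurableSet A) (hB : MeasurableSet B)
    (hAB : Disjoint A B) :
    cov (fun ω => ∑ i ∈ Finset.range (K ω), A.indicator (1 : E → ℝ) (X i ω))
        (fun ω => ∑ i ∈ Finset.range (K ω), B.indicator (1 : E → ℝ) (X i ω)) P
      = (variance (fun ω => (K ω : ℝ)) P - ∫ ω, (K ω : ℝ) ∂P)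
          * (ν A).toReal * (ν B).toReal := by
  have h := cov_pointCount_of_indepFun hK hX hlaw (fun i j hij => hiid.indepFun hij) hindep hK2
    hA hB
  rwa [hAB.inter_eq, measureReal_empty, mul_zero, zero_add] at h

/-- For a mixed binomial process `N = (κ, ν)` with counting variable `K ~ κ`
of finite mean `c` and finite variance `δ²`, and disjoint measurable sets `A, B`, the counting
variables `N(A) = ∑_{i=1}^K 1_A(X_i)` and `N(B) = ∑_{i=1}^K 1_B(X_i)` satisfy
`Cov(N(A), N(B)) = (δ² − c) · ν(A) · ν(B)`. -/
theorem mixedBinomial_covariance_disjoint_sets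
    {Ω : Type*} [MeasurableSpace Ω] (P : Measure Ω) [IsProbabilityMeasure P]
    {E : Type*} [mE : MeasurableSpace E] (ν : Measure E) [IsProbabilityMeasure ν]
    (K : Ω → ℕ) (X : ℕ → Ω → E)
    (hK : Measurable K) (hX : ∀ i, Measurable (X i))
    -- the Xᵢ are iid with common law ν
    (hlaw : ∀ i, Measure.map (X i) P = ν)
    (hiid : iIndepFun X P)
    -- K is independent of the sequence (Xᵢ)
    (hindep : IndepFun K (fun ω i => X i ω) P)
    -- the counting distribution κ (the law of K) has finite mean and finite variance
    (hK2 : MemLp (fun ω => (K ω : ℝ)) 2 P)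
    (A B : Set E) (hA : MeasurableSet A) (hB : MeasurableSet B)
    (hAB : Disjoint A B) :
    cov (fun ω => ∑ i ∈ Finset.range (K ω), A.indicator (1 : E → ℝ) (X i ω))
        (fun ω => ∑ i ∈ Finset.range (K ω), B.indicator (1 : E → ℝ) (X i ω)) P
      = (variance (fun ω => (K ω : ℝ)) P - ∫ ω, (K ω : ℝ) ∂P)
          * (ν A).toReal * (ν B).toReal :=
  mixedBinomial_covariance_disjoint_sets_general P (mE := mE) ν K X hK hX hlaw hiid hindep hK2 A B
    hA hB hAB
end

section
/- Let N = (κ, ν) be a binomial process on a measurable space (E, 𝓔), i.e., a mixed binomial process whose counting distribution is the Dirac measure at n ∈ ℕ with n ≥ 1 (so K = n almost surely, c = n, δ² = 0). Let f be a nonnegative measurable function with ν(f²) < ∞ and Var_ν(f) = ν(f²) − (ν(f))² > 0, and let P be a finite measurable partition of E containing at least two elements D with ν(f·1_D) > 0. Then: (i) for each D ∈ P, Var(N(f·1_D)) / Var(Nf) = Var_ν(f·1_D) / Var_ν(f); (ii) 𝕊ᵃ = Σ_{D ∈ P} Var(N(f·1_D)) / Var(Nf) > 1; and (iii) 𝕊ᵇ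 = Σ_{D ∈ P} Σ_{D' ∈ P, D' ≠ D} ( −ν(f·1_D)·ν(f·1_{D'}) ) / Var_ν(f) < 0. -/
/-!
For i.i.d. `Xᵢ` with law `ν`, `Var(∑_{i<n} g(Xᵢ)) = n Var_ν(g)`, so the factor `n` cancels in every
ratio and (i) is a statement about `ν` alone. Since `f = ∑_D f 1_D` and `(f 1_D)² = f² 1_D`,
the means and second moments of the pieces add up, and expanding `(ν f)² = (∑_D ν(f 1_D))²` gives
`∑_D Var_ν(f 1_D) = Var_ν(f) + ∑_{D ≠ D'} ν(f 1_D) ν(f 1_D')`. The cross sum is positive, its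
terms being nonnegative with two of them positive; this is (ii), and (iii) is minus the cross sum
divided by `Var_ν(f)`.
-/

open MeasureTheory ProbabilityTheory Finset
open scoped Classical

theorem Finset.sq_sum_eq_sum_sq_add_sum_sum_erase {ι R : Type*} [CommSemiring R]
    [DecidableEq ι] (s : Finset ι) (a : ι → R) :
    (∑ i ∈ s, a i) ^ 2 = ∑ i ∈ s, a i ^ 2 + ∑ i ∈ s, ∑ j ∈ s.erase i, a i * a j := by
  rw [sq, sum_mul_sum, ← sum_add_distrib]
  refine sum_congr rfl fun i hi => ?_
  rw [← add_sum_erase s (fun j => a i * a j) hi, sq]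

theorem Finset.sum_sum_erase_mul_pos {ι R : Type*} [Semiring R] [PartialOrder R]
    [IsStrictOrderedRing R] [DecidableEq ι] {s : Finset ι} {a : ι → R}
    (ha : ∀ i ∈ s, 0 ≤ a i) {i j : ι} (hi : i ∈ s) (hj : j ∈ s) (hij : i ≠ j)
    (hai : 0 < a i) (haj : 0 < a j) :
    0 < ∑ k ∈ s, ∑ l ∈ s.erase k, a k * a l := by
  have hterm : ∀ k ∈ s, ∀ l ∈ s.erase k, 0 ≤ a k * a l := fun k hk l hl =>
    mul_nonneg (ha k hk) (ha l (mem_of_mem_erase hl))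
  refine sum_pos' (fun k hk => sum_nonneg (hterm k hk)) ⟨i, hi, ?_⟩
  exact sum_pos' (hterm i hi) ⟨j, mem_erase.mpr ⟨hij.symm, hj⟩, mul_pos hai haj⟩

namespace ProbabilityTheory

variable {Ω E ι : Type*} [MeasurableSpace Ω] [MeasurableSpace E]

theorem variance_sum_comp_eq_card_mul {P : Measure Ω} {ν : Measure E} {X : ι → Ω → E}
    (hX : ∀ i, MeasurePreserving (X i) P ν) (hindep : Pairwise fun i j => X i ⟂ᵢ[P] X j)
    {g : E → ℝ} (hg : Measurable g) (hg2 : MemLp g 2 ν) (s : Finset ι) :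
    Var[fun ω => ∑ i ∈ s, g (X i ω); P] = #s * Var[g; ν] := by
  have hgX : ∀ i ∈ s, MemLp (fun ω => g (X i ω)) 2 P := fun i _ =>
    hg2.comp_measurePreserving (hX i)
  calc Var[fun ω => ∑ i ∈ s, g (X i ω); P]
      = ∑ i ∈ s, Var[fun ω => g (X i ω); P] := by
        rw [← IndepFun.variance_sum hgX fun i _ j _ hij => (hindep hij).comp hg hg]
        congr with ω
        simp
    _ = #s * Var[g; ν] := by
        rw [sum_congr rfl fun i _ => (hX i).variance_fun_comp hg.aemeasurable, sum_const,
          nsmul_eq_mul]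

theorem variance_indicator_eq_sub {μ : Measure E} [IsProbabilityMeasure μ] {f : E → ℝ}
    (hf : MemLp f 2 μ) {D : Set E} (hD : MeasurableSet D) :
    Var[D.indicator f; μ]
      = ∫ x, D.indicator (fun y => f y ^ 2) x ∂μ - (∫ x, D.indicator f x ∂μ) ^ 2 := by
  rw [variance_eq_sub (hf.indicator hD)]
  congr with x
  by_cases hx : x ∈ D <;> simp [hx]

theorem integral_eq_sum_integral_indicator {μ : Measure E} {Pp : Finset (Set E)}
    (hmeas : ∀ D ∈ Pp, MeasurableSet D) (hdisj : (Pp : Set (Set E)).PairwiseDisjoint id)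
    (hcover : ⋃ D ∈ Pp, D = Set.univ) {f : E → ℝ} (hf : Integrable f μ) :
    ∫ x, f x ∂μ = ∑ D ∈ Pp, ∫ x, D.indicator f x ∂μ := by
  rw [← setIntegral_univ, ← hcover]
  exact (integral_biUnion_finset (s := id) Pp hmeas hdisj fun _ _ => hf.integrableOn).trans
    (sum_congr rfl fun D hD => (integral_indicator (hmeas D hD)).symm)

theorem sum_variance_indicator_eq {μ : Measure E} [IsProbabilityMeasure μ] {Pp : Finset (Set E)}
    (hmeas : ∀ D ∈ Pp, MeasurableSet D) (hdisj : (Pp : Set (Set E)).PairwiseDisjoint id)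
    (hcover : ⋃ D ∈ Pp, D = Set.univ) {f : E → ℝ} (hf : MemLp f 2 μ) :
    ∑ D ∈ Pp, Var[D.indicator f; μ] = Var[f; μ]
      + ∑ D ∈ Pp, ∑ D' ∈ Pp.erase D, (∫ x, D.indicator f x ∂μ) * ∫ x, D'.indicator f x ∂μ := by
  have hsq : ∫ x, f x ^ 2 ∂μ = ∑ D ∈ Pp, ∫ x, D.indicator (fun y => f y ^ 2) x ∂μ :=
    integral_eq_sum_integral_indicator hmeas hdisj hcover hf.integrable_sq
  have hmean := integral_eq_sum_integral_indicator hmeas hdisj hcover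
    (hf.integrable one_le_two)
  rw [sum_congr rfl fun D hD => variance_indicator_eq_sub hf (hmeas D hD), sum_sub_distrib,
    ← Set.indicator_univ f, variance_indicator_eq_sub hf MeasurableSet.univ,
    Set.indicator_univ, Set.indicator_univ, ← hsq, hmean, sq_sum_eq_sum_sq_add_sum_sum_erase]
  ring

end ProbabilityTheory

/-- For a binomial process `N = (Dirac n, ν)` (a mixed binomial process
whose counting variable is the constant `n ≥ 1`, so `c = n`, `δ² = 0`), a nonnegative
measurable `f` with `ν(f²) < ∞` and `Var_ν(f) = ν(f²) − (ν f)² > 0`, and a finite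
measurable partition `Pp` of `E` containing at least two elements `D` with `ν(f·1_D) > 0`:
(i) for each `D ∈ Pp`, `Var(N(f·1_D))/Var(Nf) = Var_ν(f·1_D)/Var_ν(f)`;
(ii) `𝕊ᵃ = ∑_{D ∈ Pp} Var(N(f·1_D))/Var(Nf) > 1`;
(iii) `𝕊ᵇ = ∑_{D ∈ Pp} ∑_{D' ≠ D} (−ν(f·1_D)·ν(f·1_{D'}))/Var_ν(f) < 0`. -/
theorem binomialProcess_sensitivity_indices
    {Ω : Type*} [MeasurableSpace Ω] (P : Measure Ω) [IsProbabilityMeasure P]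
    {E : Type*} [mE : MeasurableSpace E] (ν : Measure E) [IsProbabilityMeasure ν]
    (n : ℕ) (hn : 1 ≤ n) (X : ℕ → Ω → E)
    (hX : ∀ i, Measurable (X i))
    -- the Xᵢ are iid with common law ν (the counting variable is the constant n)
    (hlaw : ∀ i, Measure.map (X i) P = ν)
    (hiid : iIndepFun X P)
    (f : E → ℝ) (hf : Measurable f) (hf0 : ∀ x, 0 ≤ f x)
    -- ν(f²) < ∞
    (hf2 : Integrable (fun x => f x ^ 2) ν)
    -- Var_ν(f) > 0
    (hvarf : 0 < (∫ x, f x ^ 2 ∂ν) - (∫ x, f x ∂ν) ^ 2)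
    -- Pp is a finite measurable partition of E into pairwise disjoint sets
    (Pp : Finset (Set E)) (hPmeas : ∀ D ∈ Pp, MeasurableSet D)
    (hPdisj : ∀ D ∈ Pp, ∀ D' ∈ Pp, D ≠ D' → Disjoint D D')
    (hPcover : ⋃ D ∈ Pp, D = Set.univ)
    -- at least two elements of the partition with ν(f·1_D) > 0
    (htwo : ∃ D₁ ∈ Pp, ∃ D₂ ∈ Pp, D₁ ≠ D₂ ∧
      0 < ∫ x, D₁.indicator f x ∂ν ∧ 0 < ∫ x, D₂.indicator f x ∂ν) :
    (∀ D ∈ Pp,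
        variance (fun ω => ∑ i ∈ Finset.range n, D.indicator f (X i ω)) P
            / variance (fun ω => ∑ i ∈ Finset.range n, f (X i ω)) P
          = ((∫ x, D.indicator (fun y => f y ^ 2) x ∂ν) - (∫ x, D.indicator f x ∂ν) ^ 2)
            / ((∫ x, f x ^ 2 ∂ν) - (∫ x, f x ∂ν) ^ 2))
    ∧ 1 < ∑ D ∈ Pp,
        variance (fun ω => ∑ i ∈ Finset.range n, D.indicator f (X i ω)) P
          / variance (fun ω => ∑ i ∈ Finset.range n, f (X i ω)) P
    ∧ (∑ D ∈ Pp, ∑ D' ∈ Pp.erase D,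
          (-(∫ x, D.indicator f x ∂ν) * ∫ x, D'.indicator f x ∂ν)
            / ((∫ x, f x ^ 2 ∂ν) - (∫ x, f x ∂ν) ^ 2)) < 0 := by
  have hf2' : MemLp f 2 ν := (memLp_two_iff_integrable_sq hf.aestronglyMeasurable).mpr hf2
  have hvar_f : Var[f; ν] = ∫ x, f x ^ 2 ∂ν - (∫ x, f x ∂ν) ^ 2 := by
    simpa using variance_indicator_eq_sub hf2' MeasurableSet.univ
  have hN : ∀ g : E → ℝ, Measurable g → MemLp g 2 ν →
      Var[fun ω => ∑ i ∈ range n, g (X i ω); P] = n * Var[g; ν] := fun g hg hg2 => by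
    simpa using variance_sum_comp_eq_card_mul (fun i => ⟨hX i, hlaw i⟩)
      (fun i j hij => hiid.indepFun hij) hg hg2 (range n)
  have hn0 : (n : ℝ) ≠ 0 := by positivity
  have hratio : ∀ D ∈ Pp,
      Var[fun ω => ∑ i ∈ range n, D.indicator f (X i ω); P]
          / Var[fun ω => ∑ i ∈ range n, f (X i ω); P]
        = Var[D.indicator f; ν] / Var[f; ν] := fun D hD => by
    rw [hN _ (hf.indicator (hPmeas D hD)) (hf2'.indicator (hPmeas D hD)), hN f hf hf2',
      mul_div_mul_left _ _ hn0]
  obtain ⟨D₁, hD₁, D₂, hD₂, hne, hpos₁, hpos₂⟩ := htwo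
  have hcross : 0 < ∑ D ∈ Pp, ∑ D' ∈ Pp.erase D,
      (∫ x, D.indicator f x ∂ν) * ∫ x, D'.indicator f x ∂ν :=
    sum_sum_erase_mul_pos
      (fun D _ => integral_nonneg (Set.indicator_nonneg fun y _ => hf0 y)) hD₁ hD₂ hne hpos₁ hpos₂
  rw [← hvar_f] at hvarf ⊢
  refine ⟨fun D hD => by rw [hratio D hD, variance_indicator_eq_sub hf2' (hPmeas D hD)], ?_, ?_⟩
  · rw [sum_congr rfl hratio, ← sum_div,
      sum_variance_indicator_eq hPmeas hPdisj hPcover hf2', one_lt_div hvarf]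
    linarith
  · simp only [neg_mul, neg_div, sum_neg_distrib, ← sum_div]
    exact neg_neg_iff_pos.mpr (div_pos hcross hvarf)
end

section
/- Let (E, 𝓔, ν) be a probability space and f a nonnegative measurable function with 0 < ν(f²) < ∞. Then the sensitivity measure 𝕊 defined by 𝕊(D) = ∫_D f² dν / ν(f²) for D ∈ 𝓔 is a probability measure on (E, 𝓔), and for a mixed binomial process N = (κ, ν) with δ² = c (orthogonal case) and any measurable set D, 𝕊(D) = Var(N(f·1_D)) / Var(Nf). -/
/-!
Write `S = ∑_{i < K} g(X_i)`. Since `K` is independent of `(X_i)`, one may integrate out the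
sequence with `K` frozen: `E[S] = E[K] m` and `E[S²] = E[K] v + E[K²] m²`, where `m` and `v` are
the mean and variance of `g` under `ν` (the second identity is the variance of a sum of `n`
independent terms, with `n = K`). Hence `Var S = E[K] v + Var(K) m²` (Blackwell–Girshick), and
when `Var K = E K = c` this is `c ν(g²)`. Taking `g = f 1_D` and `g = f`, the ratio of variances
is `∫_D f² dν / ν(f²) = 𝕊(D)`, the factor `c > 0` cancelling.
-/

open MeasureTheory ProbabilityTheory

namespace ProbabilityTheory

variable {Ω α β : Type*} [MeasurableSpace Ω] [MeasurableSpace α] [MeasurableSpace β]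
  {P : Measure Ω} [IsFiniteMeasure P] {K : Ω → α} {V : Ω → β} {F : α → β → ℝ}

theorem IndepFun.integrable_comp_iff_integrable_prod (hind : IndepFun K V P)
    (hK : Measurable K) (hV : Measurable V) (hF : Measurable (Function.uncurry F)) :
    Integrable (fun ω => F (K ω) (V ω)) P ↔
      Integrable (Function.uncurry F) ((P.map K).prod (P.map V)) := by
  rw [← (indepFun_iff_map_prod_eq_prod_map_map hK.aemeasurable hV.aemeasurable).1 hind,
    integrable_map_measure hF.aestronglyMeasurable (hK.prodMk hV).aemeasurable]
  rfl

theorem IndepFun.integrable_comp_of_integrable_integral_norm (hind : IndepFun K V P)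
    (hK : Measurable K) (hV : Measurable V) (hF : Measurable (Function.uncurry F))
    (hFa : ∀ a, Integrable (fun ω => F a (V ω)) P)
    (hnorm : Integrable (fun ω => ∫ ω', ‖F (K ω) (V ω')‖ ∂P) P) :
    Integrable (fun ω => F (K ω) (V ω)) P := by
  have hinner (a : α) : ∫ b, ‖F a b‖ ∂(P.map V) = ∫ ω', ‖F a (V ω')‖ ∂P :=
    integral_map hV.aemeasurable (hF.comp measurable_prodMk_left).norm.aestronglyMeasurable
  rw [hind.integrable_comp_iff_integrable_prod hK hV hF,
    integrable_prod_iff hF.aestronglyMeasurable]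
  refine ⟨ae_of_all _ fun a => ?_, ?_⟩
  · exact (integrable_map_measure (hF.comp measurable_prodMk_left).aestronglyMeasurable
      hV.aemeasurable).2 (hFa a)
  · refine (integrable_map_measure ?_ hK.aemeasurable).2 ?_
    · exact hF.stronglyMeasurable.norm.integral_prod_right'.aestronglyMeasurable
    · simpa only [Function.comp_def, Function.uncurry_apply_pair, hinner] using hnorm

theorem IndepFun.integral_comp_eq_integral_integral_s10 (hind : IndepFun K V P)
    (hK : Measurable K) (hV : Measurable V) (hF : Measurable (Function.uncurry F))
    (hint : Integrable (fun ω => F (K ω) (V ω)) P) :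
    ∫ ω, F (K ω) (V ω) ∂P = ∫ ω, ∫ ω', F (K ω) (V ω') ∂P ∂P := by
  have hlaw := (indepFun_iff_map_prod_eq_prod_map_map hK.aemeasurable hV.aemeasurable).1 hind
  have hinner (a : α) : ∫ b, F a b ∂(P.map V) = ∫ ω', F a (V ω') ∂P :=
    integral_map hV.aemeasurable (hF.comp measurable_prodMk_left).aestronglyMeasurable
  calc ∫ ω, F (K ω) (V ω) ∂P
      = ∫ p, Function.uncurry F p ∂((P.map K).prod (P.map V)) := by
        rw [← hlaw, integral_map (hK.prodMk hV).aemeasurable hF.aestronglyMeasurable]; rfl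
    _ = ∫ a, ∫ b, F a b ∂(P.map V) ∂(P.map K) :=
        integral_prod _ ((hind.integrable_comp_iff_integrable_prod hK hV hF).1 hint)
    _ = ∫ ω, ∫ ω', F (K ω) (V ω') ∂P ∂P := by
        simp only [hinner]
        refine integral_map hK.aemeasurable ?_
        simpa only [Function.uncurry_apply_pair, hinner] using
          (hF.stronglyMeasurable.integral_prod_right' (ν := P.map V)).aestronglyMeasurable

end ProbabilityTheory

section RandomSums

variable {Ω : Type*} [MeasurableSpace Ω] {P : Measure Ω} {Y : ℕ → Ω → ℝ} {m v : ℝ}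

theorem integral_sum_range_of_integral_eq (hY : ∀ i, Integrable (Y i) P)
    (hm : ∀ i, ∫ ω, Y i ω ∂P = m) (n : ℕ) :
    ∫ ω, ∑ i ∈ Finset.range n, Y i ω ∂P = n * m := by
  simp [integral_finsetSum _ fun i _ => hY i, hm]

theorem integral_sq_sum_range_of_pairwise_indepFun [IsProbabilityMeasure P]
    (hY : ∀ i, MemLp (Y i) 2 P) (hpair : Pairwise fun i j => IndepFun (Y i) (Y j) P)
    (hm : ∀ i, ∫ ω, Y i ω ∂P = m) (hv : ∀ i, variance (Y i) P = v) (n : ℕ) :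
    ∫ ω, (∑ i ∈ Finset.range n, Y i ω) ^ 2 ∂P = n * v + (n * m) ^ 2 := by
  have hT : MemLp (∑ i ∈ Finset.range n, Y i) 2 P := memLp_finsetSum' _ fun i _ => hY i
  have hvar := variance_eq_sub hT
  rw [IndepFun.variance_sum (fun i _ => hY i) fun i _ j _ hij => hpair hij] at hvar
  simp only [hv, Finset.sum_const, Finset.card_range, nsmul_eq_mul, Pi.pow_apply,
    Finset.sum_apply] at hvar
  rw [integral_sum_range_of_integral_eq (fun i => (hY i).integrable one_le_two) hm] at hvar
  linarith

theorem variance_sum_range_of_indepFun [IsProbabilityMeasure P] {K : Ω → ℕ}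
    (hK : Measurable K) (hK2 : MemLp (fun ω => (K ω : ℝ)) 2 P)
    (hY : ∀ i, Measurable (Y i)) (hY2 : ∀ i, MemLp (Y i) 2 P)
    (hpair : Pairwise fun i j => IndepFun (Y i) (Y j) P)
    (hind : IndepFun K (fun ω i => Y i ω) P)
    (hm : ∀ i, ∫ ω, Y i ω ∂P = m) (hv : ∀ i, variance (Y i) P = v) :
    variance (fun ω => ∑ i ∈ Finset.range (K ω), Y i ω) P
      = (∫ ω, (K ω : ℝ) ∂P) * v + variance (fun ω => (K ω : ℝ)) P * m ^ 2 := by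
  have hV : Measurable fun ω i => Y i ω := measurable_pi_lambda _ hY
  have hF : Measurable (Function.uncurry fun n (y : ℕ → ℝ) => ∑ i ∈ Finset.range n, y i) :=
    measurable_from_prod_countable_right fun n =>
      Finset.measurable_sum (Finset.range n) fun i _ => measurable_pi_apply i
  have hF2 : Measurable (Function.uncurry fun n (y : ℕ → ℝ) => (∑ i ∈ Finset.range n, y i) ^ 2) :=
    hF.pow_const 2
  have hK1 : Integrable (fun ω => (K ω : ℝ)) P := hK2.integrable one_le_two
  have hKsq : Integrable (fun ω => (K ω : ℝ) ^ 2) P :=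
    (memLp_two_iff_integrable_sq hK2.aestronglyMeasurable).1 hK2
  have hT2 (n : ℕ) : Integrable (fun ω => (∑ i ∈ Finset.range n, Y i ω) ^ 2) P :=
    (memLp_finsetSum _ fun i _ => hY2 i).integrable_sq
  have hS2 : Integrable (fun ω => (∑ i ∈ Finset.range (K ω), Y i ω) ^ 2) P := by
    refine hind.integrable_comp_of_integrable_integral_norm hK hV hF2 hT2 ?_
    simp only [norm_pow, Real.norm_eq_abs, sq_abs,
      integral_sq_sum_range_of_pairwise_indepFun hY2 hpair hm hv, mul_pow]
    exact (hK1.mul_const v).add (hKsq.mul_const _)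
  have hS : MemLp (fun ω => ∑ i ∈ Finset.range (K ω), Y i ω) 2 P :=
    (memLp_two_iff_integrable_sq (hF.comp (hK.prodMk hV)).aestronglyMeasurable).2 hS2
  have hES : ∫ ω, ∑ i ∈ Finset.range (K ω), Y i ω ∂P = (∫ ω, (K ω : ℝ) ∂P) * m := by
    rw [hind.integral_comp_eq_integral_integral_s10 hK hV hF (hS.integrable one_le_two)]
    simp only [integral_sum_range_of_integral_eq (fun i => (hY2 i).integrable one_le_two) hm]
    exact integral_mul_const _ _
  have hES2 : ∫ ω, (∑ i ∈ Finset.range (K ω), Y i ω) ^ 2 ∂P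
      = (∫ ω, (K ω : ℝ) ∂P) * v + (∫ ω, (K ω : ℝ) ^ 2 ∂P) * m ^ 2 := by
    rw [hind.integral_comp_eq_integral_integral_s10 hK hV hF2 hS2]
    simp only [integral_sq_sum_range_of_pairwise_indepFun hY2 hpair hm hv, mul_pow]
    rw [integral_add (hK1.mul_const v) (hKsq.mul_const _), integral_mul_const, integral_mul_const]
  rw [variance_eq_sub hS, variance_eq_sub hK2]
  simp only [Pi.pow_apply, hES, hES2]
  ring

theorem variance_sum_range_comp_of_variance_eq_integral {E : Type*} [MeasurableSpace E]
    {ν : Measure E} [IsProbabilityMeasure ν] [IsProbabilityMeasure P]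
    {K : Ω → ℕ} {X : ℕ → Ω → E} (hK : Measurable K) (hX : ∀ i, Measurable (X i))
    (hlaw : ∀ i, P.map (X i) = ν) (hiid : iIndepFun X P)
    (hindep : IndepFun K (fun ω i => X i ω) P) (hK2 : MemLp (fun ω => (K ω : ℝ)) 2 P)
    (hortho : variance (fun ω => (K ω : ℝ)) P = ∫ ω, (K ω : ℝ) ∂P)
    {g : E → ℝ} (hg : Measurable g) (hg2 : Integrable (fun x => g x ^ 2) ν) :
    variance (fun ω => ∑ i ∈ Finset.range (K ω), g (X i ω)) P
      = (∫ ω, (K ω : ℝ) ∂P) * ∫ x, g x ^ 2 ∂ν := by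
  have hgL2 : MemLp g 2 ν := (memLp_two_iff_integrable_sq hg.aestronglyMeasurable).2 hg2
  have hmp (i : ℕ) : MeasurePreserving (X i) P ν := ⟨hX i, hlaw i⟩
  have hmean (i : ℕ) : ∫ ω, g (X i ω) ∂P = ∫ x, g x ∂ν :=
    hlaw i ▸ (integral_map (hX i).aemeasurable hg.aestronglyMeasurable).symm
  rw [variance_sum_range_of_indepFun (Y := fun i ω => g (X i ω)) hK hK2 (fun i => hg.comp (hX i))
      (fun i => hgL2.comp_measurePreserving (hmp i))
      (fun i j hij => (hiid.indepFun hij).comp hg hg)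
      (hindep.comp measurable_id (measurable_pi_lambda _ fun i => hg.comp (measurable_pi_apply i)))
      hmean (fun i => (hmp i).variance_fun_comp hg.aemeasurable),
    hortho, variance_eq_sub hgL2]
  simp only [Pi.pow_apply]
  ring

end RandomSums

section SensitivityMeasure

variable {E : Type*} [MeasurableSpace E] {ν : Measure E} {h : E → ℝ}

theorem withDensity_ofReal_apply_eq_ofReal_setIntegral (hh : Integrable h ν)
    (h0 : ∀ x, 0 ≤ h x) {D : Set E} (hD : MeasurableSet D) :
    ν.withDensity (fun x => ENNReal.ofReal (h x)) D = ENNReal.ofReal (∫ x in D, h x ∂ν) := by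
  rw [withDensity_apply _ hD, ofReal_integral_eq_lintegral_ofReal hh.restrict (ae_of_all _ h0)]

theorem isProbabilityMeasure_inv_smul_withDensity_ofReal (hh : Integrable h ν)
    (h0 : ∀ x, 0 ≤ h x) (hpos : 0 < ∫ x, h x ∂ν) :
    IsProbabilityMeasure
      ((ENNReal.ofReal (∫ x, h x ∂ν))⁻¹ • ν.withDensity (fun x => ENNReal.ofReal (h x))) := by
  constructor
  rw [Measure.smul_apply, withDensity_ofReal_apply_eq_ofReal_setIntegral hh h0 .univ,
    setIntegral_univ, smul_eq_mul,
    ENNReal.inv_mul_cancel (ENNReal.ofReal_pos.2 hpos).ne' ENNReal.ofReal_ne_top]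

theorem toReal_inv_smul_withDensity_ofReal_apply (hh : Integrable h ν) (h0 : ∀ x, 0 ≤ h x)
    {D : Set E} (hD : MeasurableSet D) :
    (((ENNReal.ofReal (∫ x, h x ∂ν))⁻¹ • ν.withDensity (fun x => ENNReal.ofReal (h x))) D).toReal
      = (∫ x in D, h x ∂ν) / ∫ x, h x ∂ν := by
  rw [Measure.smul_apply, withDensity_ofReal_apply_eq_ofReal_setIntegral hh h0 hD, smul_eq_mul,
    ENNReal.toReal_mul, ENNReal.toReal_inv, ENNReal.toReal_ofReal (integral_nonneg h0),
    ENNReal.toReal_ofReal (setIntegral_nonneg hD fun x _ => h0 x), inv_mul_eq_div]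

end SensitivityMeasure

theorem sensitivity_measure_prob_and_eq_varianceRatio_general
    {Ω : Type*} [MeasurableSpace Ω] (P : Measure Ω) [IsProbabilityMeasure P]
    {E : Type*} [mE : MeasurableSpace E] (ν : Measure E) [IsProbabilityMeasure ν]
    (K : Ω → ℕ) (X : ℕ → Ω → E)
    (hK : Measurable K) (hX : ∀ i, Measurable (X i))
    -- the Xᵢ are iid with common law ν
    (hlaw : ∀ i, Measure.map (X i) P = ν)
    (hiid : iIndepFun X P)
    -- K is independent of the sequence (Xᵢ)
    (hindep : IndepFun K (fun ω i => X i ω) P)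
    -- the counting distribution κ (the law of K) has finite mean and finite variance
    (hK2 : MemLp (fun ω => (K ω : ℝ)) 2 P)
    -- orthogonality: δ² = c, with c > 0
    (hortho : variance (fun ω => (K ω : ℝ)) P = ∫ ω, (K ω : ℝ) ∂P)
    (hc : 0 < ∫ ω, (K ω : ℝ) ∂P)
    (f : E → ℝ) (hf : Measurable f)
    -- 0 < ν(f²) < ∞
    (hf2 : Integrable (fun x => f x ^ 2) ν)
    (hf2pos : 0 < ∫ x, f x ^ 2 ∂ν) :
    IsProbabilityMeasure
        ((ENNReal.ofReal (∫ x, f x ^ 2 ∂ν))⁻¹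
          • ν.withDensity (fun x => ENNReal.ofReal (f x ^ 2)))
    ∧ ∀ D : Set E, MeasurableSet D →
        (((ENNReal.ofReal (∫ x, f x ^ 2 ∂ν))⁻¹
            • ν.withDensity (fun x => ENNReal.ofReal (f x ^ 2))) D).toReal
          = variance (fun ω => ∑ i ∈ Finset.range (K ω), D.indicator f (X i ω)) P
            / variance (fun ω => ∑ i ∈ Finset.range (K ω), f (X i ω)) P := by
  refine ⟨isProbabilityMeasure_inv_smul_withDensity_ofReal hf2 (fun x => sq_nonneg _) hf2pos,
    fun D hD => ?_⟩
  have hsq : (fun x => D.indicator f x ^ 2) = D.indicator fun x => f x ^ 2 := by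
    ext x
    by_cases hx : x ∈ D <;> simp [hx]
  rw [toReal_inv_smul_withDensity_ofReal_apply hf2 (fun x => sq_nonneg _) hD,
    variance_sum_range_comp_of_variance_eq_integral hK hX hlaw hiid hindep hK2 hortho
      (hf.indicator hD) (hsq ▸ hf2.indicator hD),
    variance_sum_range_comp_of_variance_eq_integral hK hX hlaw hiid hindep hK2 hortho hf hf2,
    mul_div_mul_left _ _ hc.ne', hsq, integral_indicator hD]

/-- For a probability space `(E, 𝓔, ν)` and a nonnegative measurable `f`
with `0 < ν(f²) < ∞`, the sensitivity measure `𝕊(D) = ∫_D f² dν / ν(f²)` is a probability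
measure on `(E, 𝓔)`; and for a mixed binomial process `N = (κ, ν)` with `δ² = c > 0`
(orthogonal case) and every measurable set `D`, `𝕊(D) = Var(N(f·1_D)) / Var(Nf)`. -/
theorem sensitivity_measure_prob_and_eq_varianceRatio
    {Ω : Type*} [MeasurableSpace Ω] (P : Measure Ω) [IsProbabilityMeasure P]
    {E : Type*} [mE : MeasurableSpace E] (ν : Measure E) [IsProbabilityMeasure ν]
    (K : Ω → ℕ) (X : ℕ → Ω → E)
    (hK : Measurable K) (hX : ∀ i, Measurable (X i))
    -- the Xᵢ are iid with common law ν
    (hlaw : ∀ i, Measure.map (X i) P = ν)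
    (hiid : iIndepFun X P)
    -- K is independent of the sequence (Xᵢ)
    (hindep : IndepFun K (fun ω i => X i ω) P)
    -- the counting distribution κ (the law of K) has finite mean and finite variance
    (hK2 : MemLp (fun ω => (K ω : ℝ)) 2 P)
    -- orthogonality: δ² = c, with c > 0
    (hortho : variance (fun ω => (K ω : ℝ)) P = ∫ ω, (K ω : ℝ) ∂P)
    (hc : 0 < ∫ ω, (K ω : ℝ) ∂P)
    (f : E → ℝ) (hf : Measurable f) (hf0 : ∀ x, 0 ≤ f x)
    -- 0 < ν(f²) < ∞
    (hf2 : Integrable (fun x => f x ^ 2) ν)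
    (hf2pos : 0 < ∫ x, f x ^ 2 ∂ν) :
    IsProbabilityMeasure
        ((ENNReal.ofReal (∫ x, f x ^ 2 ∂ν))⁻¹
          • ν.withDensity (fun x => ENNReal.ofReal (f x ^ 2)))
    ∧ ∀ D : Set E, MeasurableSet D →
        (((ENNReal.ofReal (∫ x, f x ^ 2 ∂ν))⁻¹
            • ν.withDensity (fun x => ENNReal.ofReal (f x ^ 2))) D).toReal
          = variance (fun ω => ∑ i ∈ Finset.range (K ω), D.indicator f (X i ω)) P
            / variance (fun ω => ∑ i ∈ Finset.range (K ω), f (X i ω)) P :=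
  sensitivity_measure_prob_and_eq_varianceRatio_general P (mE := mE) ν K X hK hX hlaw hiid hindep
    hK2 hortho hc f hf hf2 hf2pos
end
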